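/- arXiv:0912.1902 — 2 statements merged into one kernel-verified Lean document; each statement's English description precedes it below -/
import Mathlib

section
/- Let A be an n×n labeled transition matrix (whose entries do not contain τ), S a boolean n×n matrix of silent steps, V a surjective boolean n×N collector, and Π = S*. If the weak-bisimulation conditions VVᵀΠV = ΠV and VVᵀΠAΠV = ΠAΠV hold, then (VᵀSV)* (VᵀAV) (VᵀSV)* = Vᵀ Π A Π V. (Soundness of weak lumping: taking the τ-closure after lumping agrees with lumping the τ-closed system.) -/
open Matrix

instance : CommSemiring Prop where
  add a b := a ∨ b
  add_assoc a b c := propext or_assoc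
  zero := False
  zero_add a := false_or a
  add_zero a := or_false a
  add_comm a b := propext or_comm
  nsmul n p := n ≠ 0 ∧ p
  nsmul_zero p := by show ((0:ℕ) ≠ 0 ∧ p) = False; simp
  nsmul_succ n p := by
    show ((n + 1 : ℕ) ≠ 0 ∧ p) = ((n ≠ 0 ∧ p) ∨ p)
    by_cases h : n = 0 <;> simp [h]
  mul a b := a ∧ b
  mul_assoc a b c := propext and_assoc
  one := True
  one_mul a := true_and a
  mul_one a := and_true a
  left_distrib a b c := propext and_or_left
  right_distrib a b c := propext or_and_right
  zero_mul a := false_and a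
  mul_zero a := and_false a
  mul_comm a b := propext and_comm

instance {α : Type*} : CommSemiring (Set α) where
  add a b := a ∪ b
  add_assoc := Set.union_assoc
  zero := (∅ : Set α)
  zero_add := Set.empty_union
  add_zero := Set.union_empty
  add_comm := Set.union_comm
  nsmul n s := {x ∈ s | n ≠ 0}
  nsmul_zero s := by show {x ∈ s | (0:ℕ) ≠ 0} = (∅ : Set α); simp
  nsmul_succ n s := by
    show {x ∈ s | (n + 1 : ℕ) ≠ 0} = {x ∈ s | n ≠ 0} ∪ s
    by_cases h : n = 0 <;> ext x <;> simp [h]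
  mul a b := a ∩ b
  mul_assoc := Set.inter_assoc
  one := (Set.univ : Set α)
  one_mul := Set.univ_inter
  mul_one := Set.inter_univ
  left_distrib := Set.inter_union_distrib_left
  right_distrib := Set.union_inter_distrib_right
  zero_mul := Set.empty_inter
  mul_zero := Set.inter_empty
  mul_comm := Set.inter_comm

/-- Embedding of boolean matrices into `Set 𝒜`-labeled matrices:
a `True` entry becomes the full action set, a `False` entry the empty set. -/
def emb (𝒜 : Type*) {m p : Type*} (M : Matrix m p Prop) : Matrix m p (Set 𝒜) :=
  Matrix.of fun i j => {_a : 𝒜 | M i j}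

/-- Reflexive-transitive closure `S* = Σ_{k ≥ 0} S^k` of a boolean matrix. -/
def mstar {n : ℕ} (S : Matrix (Fin n) (Fin n) Prop) : Matrix (Fin n) (Fin n) Prop :=
  Matrix.of fun i j => ∃ k : ℕ, (S ^ k) i j

/-!
Read as relations, `mstar S` is `ReflTransGen S`, and the closure of the lumped silent steps is
`VᵀΠV`: a lumped silent path lifts to a concrete one because, by `h₁`, a block reachable by silent
steps from one state of a block is reachable from every state of that block. The rest is
semiring algebra: `VVᵀΠV = ΠV` removes the inner `VVᵀ` next to the closure, and
`1 ≤ VVᵀ`, `1 ≤ Π = Π²` together with `h₂` squeeze `VᵀΠ(VVᵀ)AΠV` onto `VᵀΠAΠV`.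
-/

open Relation

theorem Finset.sum_prop_iff {ι : Type*} (s : Finset ι) (f : ι → Prop) :
    (∑ k ∈ s, f k) ↔ ∃ k ∈ s, f k := by
  classical
  induction s using Finset.induction_on with
  | empty => exact ⟨False.elim, fun ⟨_, h, _⟩ => absurd h (Finset.notMem_empty _)⟩
  | insert a s ha ih =>
    rw [Finset.sum_insert ha, Finset.exists_mem_insert, ← ih]
    rfl

namespace Matrix

variable {l m n p : Type*}

theorem mul_apply_prop [Fintype m] (M : Matrix l m Prop) (N : Matrix m n Prop) (i : l) (j : n) :
    (M * N) i j ↔ ∃ k, M i k ∧ N k j := by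
  rw [mul_apply, Finset.sum_prop_iff]
  exact ⟨fun ⟨k, _, h⟩ => ⟨k, h⟩, fun ⟨k, h⟩ => ⟨k, Finset.mem_univ k, h⟩⟩

theorem one_apply_prop [DecidableEq n] (i j : n) : (1 : Matrix n n Prop) i j ↔ i = j := by
  rw [one_apply]
  split_ifs with h
  · exact iff_of_true trivial h
  · exact iff_of_false id h

theorem transpose_mul_mul_apply_prop [Fintype l] [Fintype m] (V : Matrix l n Prop)
    (M : Matrix l m Prop) (V' : Matrix m n Prop) (c d : n) :
    (Vᵀ * M * V') c d ↔ ∃ i j, V i c ∧ M i j ∧ V' j d := by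
  simp only [mul_apply_prop, transpose_apply]
  exact ⟨fun ⟨j, ⟨i, hc, hM⟩, hd⟩ => ⟨i, j, hc, hM, hd⟩,
    fun ⟨i, j, hc, hM, hd⟩ => ⟨j, ⟨i, hc, hM⟩, hd⟩⟩

theorem one_add_eq_self_of_diag [DecidableEq n] {X : Matrix n n Prop} (hX : ∀ i, X i i) :
    1 + X = X :=
  Matrix.ext fun i j => propext
    ⟨fun h => h.elim (fun hij => ((one_apply_prop i j).1 hij) ▸ hX i) id, Or.inr⟩

theorem one_add_mul_transpose_self [DecidableEq m] [Fintype n] (V : Matrix m n Prop)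
    (hV : ∀ i, ∃ j, V i j) : 1 + V * Vᵀ = V * Vᵀ :=
  one_add_eq_self_of_diag fun i =>
    let ⟨j, hj⟩ := hV i
    (mul_apply_prop _ _ _ _).2 ⟨j, hj, hj⟩

variable {R : Type*} [Semiring R] [Fintype m] [DecidableEq m]

/-- Over an idempotent semiring `1 + Q = Q` reads `1 ≤ Q`; both sides of the conclusion equal
`W * P * X + W * P * Q * X`. -/
theorem mul_mul_mul_eq_of_absorbs (W : Matrix l m R) {P Q : Matrix m m R} (X : Matrix m p R)
    (hP : 1 + P = P) (hPP : P * P = P) (hQ : 1 + Q = Q) (hQPX : Q * P * X = P * X) :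
    W * P * Q * X = W * P * X := by
  have hX : P * X = Q * X + P * X :=
    calc P * X = Q * (1 + P) * X := by rw [hP, hQPX]
      _ = Q * X + P * X := by rw [Matrix.mul_add, Matrix.mul_one, Matrix.add_mul, hQPX]
  have hWP : W * P * P = W * P := by rw [Matrix.mul_assoc, hPP]
  calc W * P * Q * X = W * P * (1 + Q) * X := by rw [hQ]
    _ = W * P * X + W * P * Q * X := by rw [Matrix.mul_add, Matrix.mul_one, Matrix.add_mul]
    _ = W * P * X := by
      conv_rhs => rw [← hWP, Matrix.mul_assoc, hX, Matrix.mul_add, ← Matrix.mul_assoc,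
        ← Matrix.mul_assoc, hWP]
      exact add_comm _ _

end Matrix

section Closure

open Matrix

variable {n N : ℕ} (S : Matrix (Fin n) (Fin n) Prop)

theorem mstar_iff_reflTransGen (i j : Fin n) : mstar S i j ↔ ReflTransGen (S · ·) i j := by
  constructor
  · rintro ⟨k, hk⟩
    induction k generalizing i with
    | zero => exact ((one_apply_prop i j).1 (pow_zero S ▸ hk)) ▸ ReflTransGen.refl
    | succ k ih =>
      obtain ⟨b, hib, hbj⟩ := (mul_apply_prop _ _ _ _).1 (pow_succ' S k ▸ hk)
      exact ReflTransGen.head hib (ih b hbj)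
  · intro h
    induction h using ReflTransGen.head_induction_on with
    | refl => exact ⟨0, by rw [pow_zero, one_apply_prop]⟩
    | head hab _ ih =>
      obtain ⟨k, hk⟩ := ih
      exact ⟨k + 1, by rw [pow_succ', mul_apply_prop]; exact ⟨_, hab, hk⟩⟩

theorem one_add_mstar : 1 + mstar S = mstar S :=
  one_add_eq_self_of_diag fun i => (mstar_iff_reflTransGen S i i).2 ReflTransGen.refl

theorem mstar_mul_mstar : mstar S * mstar S = mstar S := by
  refine Matrix.ext fun i j => propext ?_
  simp only [mul_apply_prop, mstar_iff_reflTransGen]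
  exact ⟨fun ⟨_, hik, hkj⟩ => hik.trans hkj, fun h => ⟨i, ReflTransGen.refl, h⟩⟩

theorem mstar_transpose_mul_mul (V : Matrix (Fin n) (Fin N) Prop)
    (hcol : ∀ i, ∃! j, V i j) (hsurj : ∀ j, ∃ i, V i j)
    (h₁ : V * Vᵀ * mstar S * V = mstar S * V) :
    mstar (Vᵀ * S * V) = Vᵀ * mstar S * V := by
  refine Matrix.ext fun c d => propext ?_
  rw [mstar_iff_reflTransGen, transpose_mul_mul_apply_prop]
  constructor
  · intro h
    induction h using ReflTransGen.head_induction_on with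
    | refl =>
      obtain ⟨i, hi⟩ := hsurj d
      exact ⟨i, i, hi, (mstar_iff_reflTransGen S i i).2 ReflTransGen.refl, hi⟩
    | head hce _ ih =>
      obtain ⟨i₀, i₁, hi₀, hS, hi₁⟩ := (transpose_mul_mul_apply_prop _ _ _ _ _).1 hce
      obtain ⟨i₂, i₃, hi₂, hstar, hi₃⟩ := ih
      have hblock : (V * Vᵀ * mstar S * V) i₁ d := by
        simp only [mul_apply_prop, transpose_apply]
        exact ⟨i₃, ⟨i₂, ⟨_, hi₁, hi₂⟩, hstar⟩, hi₃⟩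
      obtain ⟨i₄, h₁₄, hi₄⟩ := (mul_apply_prop _ _ _ _).1 (h₁ ▸ hblock)
      rw [mstar_iff_reflTransGen] at h₁₄
      exact ⟨i₀, i₄, hi₀, (mstar_iff_reflTransGen S _ _).2 (ReflTransGen.head hS h₁₄), hi₄⟩
  · rintro ⟨i, i', hic, hii', hi'd⟩
    rw [mstar_iff_reflTransGen] at hii'
    induction hii' generalizing d with
    | refl => exact (hcol i).unique hic hi'd ▸ ReflTransGen.refl
    | @tail b _ _ hbc ih =>
      obtain ⟨e, hbe, -⟩ := hcol b
      exact (ih e hbe).tail ((transpose_mul_mul_apply_prop _ _ _ _ _).2 ⟨b, _, hbe, hbc, hi'd⟩)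

end Closure

section Embedding

variable (𝒜 : Type*) {l m p : Type*}

def propToSet : Prop →+* Set 𝒜 where
  toFun q := {_a | q}
  map_one' := rfl
  map_mul' _ _ := rfl
  map_zero' := rfl
  map_add' _ _ := rfl

variable {𝒜}

theorem emb_mul [Fintype m] (M : Matrix l m Prop) (M' : Matrix m p Prop) :
    emb 𝒜 (M * M') = emb 𝒜 M * emb 𝒜 M' :=
  Matrix.map_mul (f := propToSet 𝒜)

theorem emb_add (M M' : Matrix l m Prop) : emb 𝒜 (M + M') = emb 𝒜 M + emb 𝒜 M' :=
  Matrix.map_add _ (map_add (propToSet 𝒜)) M M'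

theorem emb_one [DecidableEq m] : emb 𝒜 (1 : Matrix m m Prop) = 1 :=
  Matrix.map_one _ (map_zero (propToSet 𝒜)) (map_one _)

end Embedding

theorem weak_lumping_sound_general {n N : ℕ} {𝒜 : Type*}
    (A : Matrix (Fin n) (Fin n) (Set 𝒜))
    (S : Matrix (Fin n) (Fin n) Prop)
    (V : Matrix (Fin n) (Fin N) Prop)
    (hcol : ∀ i, ∃! j, V i j) (hsurj : ∀ j, ∃ i, V i j)
    (h₁ : V * Vᵀ * mstar S * V = mstar S * V)
    (h₂ : emb 𝒜 V * emb 𝒜 Vᵀ * emb 𝒜 (mstar S) * A * emb 𝒜 (mstar S) * emb 𝒜 V =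
      emb 𝒜 (mstar S) * A * emb 𝒜 (mstar S) * emb 𝒜 V) :
    emb 𝒜 (mstar (Vᵀ * S * V)) * (emb 𝒜 Vᵀ * A * emb 𝒜 V) * emb 𝒜 (mstar (Vᵀ * S * V)) =
      emb 𝒜 Vᵀ * emb 𝒜 (mstar S) * A * emb 𝒜 (mstar S) * emb 𝒜 V := by
  set P := emb 𝒜 (mstar S)
  have hP : 1 + P = P := by rw [← emb_one, ← emb_add, one_add_mstar]
  have hPP : P * P = P := by rw [← emb_mul, mstar_mul_mstar]
  have hVVt : 1 + emb 𝒜 V * emb 𝒜 Vᵀ = emb 𝒜 V * emb 𝒜 Vᵀ := by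
    rw [← emb_mul, ← emb_one, ← emb_add, one_add_mul_transpose_self V fun i => (hcol i).exists]
  have hVVtPV : emb 𝒜 V * (emb 𝒜 Vᵀ * (P * emb 𝒜 V)) = P * emb 𝒜 V := by
    simp only [P, ← emb_mul, ← Matrix.mul_assoc, h₁]
  have hcollapse := Matrix.mul_mul_mul_eq_of_absorbs (emb 𝒜 Vᵀ) (A * P * emb 𝒜 V) hP hPP hVVt
    (by simpa only [Matrix.mul_assoc] using h₂)
  rw [mstar_transpose_mul_mul S V hcol hsurj h₁, emb_mul, emb_mul]
  simp only [Matrix.mul_assoc] at hcollapse hVVtPV ⊢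
  rw [hVVtPV, hcollapse]

/-- soundness of weak lumping — `τ`-closing the lumped system agrees
with lumping the `τ`-closed system: `(VᵀSV)* (VᵀAV) (VᵀSV)* = VᵀΠAΠV`. -/
theorem weak_lumping_sound {n N : ℕ} {𝒜 : Type*} (τ : 𝒜)
    (A : Matrix (Fin n) (Fin n) (Set 𝒜)) (hA : ∀ i j, τ ∉ A i j)
    (S : Matrix (Fin n) (Fin n) Prop)
    (V : Matrix (Fin n) (Fin N) Prop)
    (hcol : ∀ i, ∃! j, V i j) (hsurj : ∀ j, ∃ i, V i j)
    (h₁ : V * Vᵀ * mstar S * V = mstar S * V)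
    (h₂ : emb 𝒜 V * emb 𝒜 Vᵀ * emb 𝒜 (mstar S) * A * emb 𝒜 (mstar S) * emb 𝒜 V =
      emb 𝒜 (mstar S) * A * emb 𝒜 (mstar S) * emb 𝒜 V) :
    emb 𝒜 (mstar (Vᵀ * S * V)) * (emb 𝒜 Vᵀ * A * emb 𝒜 V) * emb 𝒜 (mstar (Vᵀ * S * V)) =
      emb 𝒜 Vᵀ * emb 𝒜 (mstar S) * A * emb 𝒜 (mstar S) * emb 𝒜 V :=
  weak_lumping_sound_general A S V hcol hsurj h₁ h₂
end

section
/- Let A be an n×n labeled transition matrix (whose entries do not contain τ), S a boolean n×n matrix of silent steps, ρ a boolean termination vector, V a surjective boolean n×N collector, R = VVᵀ, Π_V = (S ⊓ R)*, and Π = S*. Then Π_V ≤ Π, and if V satisfies the branching-bisimulation conditions VVᵀ(I + Π_V S)V = (I + Π_V S)V, VVᵀΠ_V A V = Π_V A V, and VVᵀΠ_V ρ = Π_V ρ, then V also satisfies the weak-bisimulation conditions VVᵀΠV = ΠV, VVᵀΠAΠV = ΠAΠV, and VVᵀΠρ = Πρ (every branching bisimulation is a weak bisimulation). -/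
open Matrix

/-- Elementwise product (meet) of boolean matrices. -/
def minf {n : ℕ} (A B : Matrix (Fin n) (Fin n) Prop) : Matrix (Fin n) (Fin n) Prop :=
  Matrix.of fun i j => A i j ∧ B i j

/-!
Read boolean matrices as relations. As `V` is a collector, `V Vᵀ` relates states of the same
block, and `V Vᵀ M = M` says that every column of `M` is a union of blocks ("saturated").
Let `T = Π_V S` (inert steps, then one silent step), so that `T* = S*`. The first branching
condition says that a `T`-step into a block can be mimicked from every state of the source's
block, by staying put or by a `T`-step into the same block; following a `T`-path step by step,
the `S*`-predecessors of a saturated set are therefore saturated. Since `Π Π_V = Π`, the columns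
of `ΠV`, `Π A_a Π V` and `Πρ` are the `S*`-predecessors of `V`, `Π_V A_a (ΠV)` and `Π_V ρ`, which
are saturated by the branching conditions. Labelled matrices are treated one action `a` at a time,
as `s ↦ a ∈ s` is a semiring homomorphism `Set 𝒜 →+* Prop`.
-/

namespace Relation

variable {α β γ ε : Type*}

/-- For a reflexive `E`, this says `E * X = X` in the boolean semiring. -/
def IsSaturated (E : α → α → Prop) (X : α → γ → Prop) : Prop :=
  ∀ ⦃i j c⦄, E i j → X j c → X i c

theorem comp_eq_self_iff {E : α → α → Prop} (hE : ∀ i, E i i) {X : α → γ → Prop} :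
    Comp E X = X ↔ IsSaturated E X := by
  refine ⟨fun h i j c hij hj => h ▸ ⟨j, hij, hj⟩, fun h => ?_⟩
  ext i c
  exact ⟨fun ⟨_, hij, hj⟩ => h hij hj, fun hi => ⟨i, hE i, hi⟩⟩

theorem IsSaturated.comp {E : α → α → Prop} {X : α → β → Prop} (hX : IsSaturated E X)
    (Y : β → γ → Prop) : IsSaturated E (Comp X Y) :=
  fun _ _ _ hij ⟨b, hjb, hbc⟩ => ⟨b, hX hij hjb, hbc⟩

section Collector

variable {V : α → β → Prop}

theorem comp_flip_self_refl (hV : ∀ i, ∃ c, V i c) (i : α) : Comp V (flip V) i i :=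
  let ⟨c, hc⟩ := hV i
  ⟨c, hc, hc⟩

theorem isSaturated_collector (hV : ∀ i, ∃! c, V i c) : IsSaturated (Comp V (flip V)) V :=
  fun _ j _ ⟨_, hid, hjd⟩ hjc => (hV j).unique hjd hjc ▸ hid

theorem IsSaturated.comp_of_comp_collector (hV : ∀ i, ∃ c, V i c) {E : ε → ε → Prop}
    {P : ε → α → Prop} (hPV : IsSaturated E (Comp P V)) {Y : α → γ → Prop}
    (hY : IsSaturated (Comp V (flip V)) Y) : IsSaturated E (Comp P Y) := by
  rintro p p' c hpp' ⟨l, hp'l, hlc⟩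
  obtain ⟨d, hld⟩ := hV l
  obtain ⟨l', hpl', hl'd⟩ := hPV hpp' ⟨l, hp'l, hld⟩
  exact ⟨l', hpl', hY ⟨d, hl'd, hld⟩ hlc⟩

end Collector

variable (E S : α → α → Prop)

/-- The matrix `S ⊓ R`. -/
def inertStep : α → α → Prop := fun i j => S i j ∧ E i j

/-- The matrix `Π_V S`. -/
def branchStep : α → α → Prop := Comp (ReflTransGen (inertStep E S)) S

variable {E S}

theorem reflTransGen_inertStep_le : ReflTransGen (inertStep E S) ≤ ReflTransGen S :=
  ReflTransGen.mono fun _ _ h => h.1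

theorem reflTransGen_branchStep : ReflTransGen (branchStep E S) = ReflTransGen S :=
  le_antisymm
    (reflTransGen_closed fun _ _ ⟨_, him, hmj⟩ => (reflTransGen_inertStep_le _ _ him).tail hmj)
    (ReflTransGen.mono fun i _ h => ⟨i, .refl, h⟩)

theorem comp_reflTransGen_inertStep {X : α → γ → Prop} :
    Comp (ReflTransGen S) (Comp (ReflTransGen (inertStep E S)) X) = Comp (ReflTransGen S) X := by
  ext i c
  constructor
  · rintro ⟨j, hij, k, hjk, hkc⟩
    exact ⟨k, hij.trans (reflTransGen_inertStep_le _ _ hjk), hkc⟩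
  · rintro ⟨j, hij, hjc⟩
    exact ⟨j, hij, j, .refl, hjc⟩

variable {X : α → γ → Prop}

theorem IsSaturated.comp_reflTransGen_branchStep
    (hX : IsSaturated E X) (hB : IsSaturated E (Comp (ReflGen (branchStep E S)) E))
    (hE : ∀ i, E i i) : IsSaturated E (Comp (ReflTransGen (branchStep E S)) X) := by
  rintro i i' c hii' ⟨j, hi'j, hjc⟩
  induction hi'j using ReflTransGen.head_induction_on generalizing i with
  | refl => exact ⟨i, .refl, hX hii' hjc⟩
  | head hi'b _ ih =>
    obtain ⟨m, him, hmb⟩ := hB hii' ⟨_, .single hi'b, hE _⟩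
    obtain ⟨k, hmk, hkc⟩ := ih hmb
    cases him with
    | refl => exact ⟨k, hmk, hkc⟩
    | single him => exact ⟨k, hmk.head him, hkc⟩

theorem IsSaturated.comp_reflTransGen
    (hX : IsSaturated E X) (hB : IsSaturated E (Comp (ReflGen (branchStep E S)) E))
    (hE : ∀ i, E i i) : IsSaturated E (Comp (ReflTransGen S) X) :=
  reflTransGen_branchStep (E := E) ▸ hX.comp_reflTransGen_branchStep hB hE

theorem IsSaturated.comp_reflTransGen_of_inertStep
    (hX : IsSaturated E (Comp (ReflTransGen (inertStep E S)) X))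
    (hB : IsSaturated E (Comp (ReflGen (branchStep E S)) E)) (hE : ∀ i, E i i) :
    IsSaturated E (Comp (ReflTransGen S) X) :=
  comp_reflTransGen_inertStep (E := E) ▸ hX.comp_reflTransGen hB hE

end Relation

theorem Prop.sum_iff {ι : Type*} (s : Finset ι) (f : ι → Prop) :
    (∑ i ∈ s, f i) ↔ ∃ i ∈ s, f i := by
  classical
  induction s using Finset.induction_on with
  | empty => exact ⟨False.elim, fun ⟨_, h, _⟩ => absurd h (Finset.notMem_empty _)⟩
  | insert i s hi ih =>
    rw [Finset.sum_insert hi, Finset.exists_mem_insert, ← ih]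
    rfl

namespace Matrix

variable {l m p : Type*}

theorem prop_mul_eq_comp [Fintype m] (M : Matrix l m Prop) (N : Matrix m p Prop) :
    M * N = Relation.Comp M N := by
  ext i j
  show (∑ k, M i k * N k j) ↔ ∃ k, M i k ∧ N k j
  rw [Prop.sum_iff]
  simp only [Finset.mem_univ, true_and]
  rfl

theorem prop_one_apply [DecidableEq m] (i j : m) : (1 : Matrix m m Prop) i j ↔ i = j := by
  rw [one_apply]
  split_ifs with h
  · exact iff_of_true trivial h
  · exact iff_of_false id h

theorem prop_one_add_eq_reflGen [DecidableEq m] (M : Matrix m m Prop) :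
    1 + M = Relation.ReflGen M := by
  ext i j
  exact ((prop_one_apply i j).trans eq_comm).or Iff.rfl |>.trans (Relation.reflGen_iff _ _ _).symm

theorem transpose_eq_flip {α : Type*} (M : Matrix m p α) : Mᵀ = flip M := rfl

theorem prop_mul_transpose_mul_eq_iff {β γ : Type*} [Fintype m] [Fintype β]
    {V : Matrix m β Prop} (hV : ∀ i, ∃ c, V i c) (M : Matrix m γ Prop) :
    V * (Vᵀ * M) = M ↔ Relation.IsSaturated (Relation.Comp V (flip V)) M := by
  rw [← Matrix.mul_assoc, prop_mul_eq_comp, prop_mul_eq_comp, transpose_eq_flip]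
  exact Relation.comp_eq_self_iff (Relation.comp_flip_self_refl hV)

end Matrix

theorem mstar_eq_reflTransGen {n : ℕ} (S : Matrix (Fin n) (Fin n) Prop) :
    mstar S = Relation.ReflTransGen S := by
  ext i j
  constructor
  · rintro ⟨k, hk⟩
    induction k generalizing j with
    | zero => exact (prop_one_apply i j).mp hk ▸ .refl
    | succ k ih =>
      rw [pow_succ, prop_mul_eq_comp] at hk
      obtain ⟨m, him, hmj⟩ := hk
      exact (ih m him).tail hmj
  · intro h
    induction h with
    | refl => exact ⟨0, (prop_one_apply i i).mpr rfl⟩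
    | tail _ hmj ih =>
      obtain ⟨k, hk⟩ := ih
      exact ⟨k + 1, by rw [pow_succ, prop_mul_eq_comp]; exact ⟨_, hk, hmj⟩⟩

theorem minf_eq_inertStep {n : ℕ} (S E : Matrix (Fin n) (Fin n) Prop) :
    minf S E = Relation.inertStep E S := rfl

def Set.memRingHom {α : Type*} (a : α) : Set α →+* Prop where
  toFun s := a ∈ s
  map_one' := rfl
  map_mul' _ _ := rfl
  map_zero' := rfl
  map_add' _ _ := rfl

theorem emb_map_memRingHom {𝒜 m p : Type*} (M : Matrix m p Prop) (a : 𝒜) :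
    (emb 𝒜 M).map (Set.memRingHom a) = M := rfl

theorem Matrix.ext_of_map_memRingHom {α m p : Type*} {M N : Matrix m p (Set α)}
    (h : ∀ a, M.map (Set.memRingHom a) = N.map (Set.memRingHom a)) : M = N := by
  ext i j a
  exact iff_of_eq (congrArg (· i j) (h a))

open Relation

theorem branching_implies_weak_general {n N : ℕ} {𝒜 : Type*}
    (A : Matrix (Fin n) (Fin n) (Set 𝒜))
    (S : Matrix (Fin n) (Fin n) Prop) (ρ : Matrix (Fin n) (Fin 1) Prop)
    (V : Matrix (Fin n) (Fin N) Prop)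
    (hcol : ∀ i, ∃! j, V i j)
    (R : Matrix (Fin n) (Fin n) Prop) (hR : R = V * Vᵀ)
    (PiV : Matrix (Fin n) (Fin n) Prop) (hPiV : PiV = mstar (minf S R))
    (Pi : Matrix (Fin n) (Fin n) Prop) (hPi : Pi = mstar S) :
    (∀ i j, PiV i j ≤ Pi i j) ∧
    ((V * Vᵀ * (1 + PiV * S) * V = (1 + PiV * S) * V ∧
        emb 𝒜 V * emb 𝒜 Vᵀ * emb 𝒜 PiV * A * emb 𝒜 V = emb 𝒜 PiV * A * emb 𝒜 V ∧
        V * Vᵀ * PiV * ρ = PiV * ρ) →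
      (V * Vᵀ * Pi * V = Pi * V ∧
        emb 𝒜 V * emb 𝒜 Vᵀ * emb 𝒜 Pi * A * emb 𝒜 Pi * emb 𝒜 V =
          emb 𝒜 Pi * A * emb 𝒜 Pi * emb 𝒜 V ∧
        V * Vᵀ * Pi * ρ = Pi * ρ)) := by
  subst hR hPiV hPi
  have hV : ∀ i, ∃ c, V i c := fun i => (hcol i).exists
  refine ⟨fun i j => ?_, ?_⟩
  · rw [mstar_eq_reflTransGen, mstar_eq_reflTransGen]
    exact reflTransGen_inertStep_le (E := V * Vᵀ) i j
  rintro ⟨h1, h2, h3⟩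
  replace h2 := fun a => congrArg (Matrix.map · (Set.memRingHom a)) h2
  simp only [Matrix.map_mul, emb_map_memRingHom, Matrix.mul_assoc,
    prop_mul_transpose_mul_eq_iff hV] at h1 h2 h3
  -- Top-down (`↓`): inside a subterm already turned into a relation, matrix lemmas cannot match.
  simp only [↓prop_mul_eq_comp, ↓prop_one_add_eq_reflGen, ↓mstar_eq_reflTransGen,
    ↓minf_eq_inertStep, ↓transpose_eq_flip] at h1 h2 h3
  set E := Comp V (flip V)
  have hB : IsSaturated E (Comp (ReflGen (branchStep E S)) E) := comp_assoc ▸ h1.comp (flip V)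
  have hE : ∀ i, E i i := comp_flip_self_refl hV
  have hSV := (isSaturated_collector hcol).comp_reflTransGen hB hE
  refine ⟨?_, Matrix.ext_of_map_memRingHom fun a => ?_, ?_⟩
  all_goals
    simp only [Matrix.map_mul, emb_map_memRingHom, Matrix.mul_assoc,
      prop_mul_transpose_mul_eq_iff hV]
    simp only [↓prop_mul_eq_comp, ↓mstar_eq_reflTransGen]
  · exact hSV
  · have hX := (comp_assoc ▸ h2 a).comp_of_comp_collector hV hSV
    exact (comp_assoc ▸ hX).comp_reflTransGen_of_inertStep hB hE
  · exact h3.comp_reflTransGen_of_inertStep hB hE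

/-- `Pi_V ≤ Pi`, and every branching bisimulation is a weak bisimulation. -/
theorem branching_implies_weak {n N : ℕ} {𝒜 : Type*} (τ : 𝒜)
    (A : Matrix (Fin n) (Fin n) (Set 𝒜)) (hA : ∀ i j, τ ∉ A i j)
    (S : Matrix (Fin n) (Fin n) Prop) (ρ : Matrix (Fin n) (Fin 1) Prop)
    (V : Matrix (Fin n) (Fin N) Prop)
    (hcol : ∀ i, ∃! j, V i j) (hsurj : ∀ j, ∃ i, V i j)
    (R : Matrix (Fin n) (Fin n) Prop) (hR : R = V * Vᵀ)
    (PiV : Matrix (Fin n) (Fin n) Prop) (hPiV : PiV = mstar (minf S R))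
    (Pi : Matrix (Fin n) (Fin n) Prop) (hPi : Pi = mstar S) :
    (∀ i j, PiV i j ≤ Pi i j) ∧
    ((V * Vᵀ * (1 + PiV * S) * V = (1 + PiV * S) * V ∧
        emb 𝒜 V * emb 𝒜 Vᵀ * emb 𝒜 PiV * A * emb 𝒜 V = emb 𝒜 PiV * A * emb 𝒜 V ∧
        V * Vᵀ * PiV * ρ = PiV * ρ) →
      (V * Vᵀ * Pi * V = Pi * V ∧
        emb 𝒜 V * emb 𝒜 Vᵀ * emb 𝒜 Pi * A * emb 𝒜 Pi * emb 𝒜 V =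
          emb 𝒜 Pi * A * emb 𝒜 Pi * emb 𝒜 V ∧
        V * Vᵀ * Pi * ρ = Pi * ρ)) :=
  branching_implies_weak_general A S ρ V hcol R hR PiV hPiV Pi hPi
end
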